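/- arXiv:1207.3781 — 10 statements merged into one kernel-verified Lean document; each statement's English description precedes it below -/
import Mathlib

section
/- Let R be a ring, L a left ideal of R with zero left annihilator, σ an endomorphism of R and τ an automorphism of R such that σ and τ agree on L. Then σ = τ, and in particular σ is an automorphism of R. -/
universe u v

/-- The left annihilator of the set `L` in `S` is zero. -/
def LAnnZero (S : Type u) [Ring S] (L : Set S) : Prop :=
  ∀ a : S, (∀ x ∈ L, a * x = 0) → a = 0

/-- The right annihilator of the set `L` in `S` is zero. -/
def RAnnZero (S : Type u) [Ring S] (L : Set S) : Prop :=
  ∀ a : S, (∀ x ∈ L, x * a = 0) → a = 0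

/-- A left ideal is essential: it meets every nonzero left ideal nontrivially. -/
def IsEssentialLeftIdeal {S : Type u} [Ring S] (L : Ideal S) : Prop :=
  ∀ I : Ideal S, I ≠ ⊥ → L ⊓ I ≠ ⊥

/-- A (possibly noncommutative) ring is semiprime: `aRa = 0` implies `a = 0`. -/
def IsSemiprimeRing (S : Type u) [Ring S] : Prop :=
  ∀ a : S, (∀ r : S, a * r * a = 0) → a = 0

/-- A (possibly noncommutative) ring is prime: it is nonzero and `aRb = 0`
implies `a = 0` or `b = 0`. -/
def IsPrimeRingE (S : Type u) [Ring S] : Prop :=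
  Nontrivial S ∧ ∀ a b : S, (∀ r : S, a * r * b = 0) → a = 0 ∨ b = 0

/-- `a` is left regular: its left annihilator is zero. -/
def LeftReg {S : Type u} [Ring S] (a : S) : Prop := ∀ x : S, x * a = 0 → x = 0

/-- `a` is right regular: its right annihilator is zero. -/
def RightReg {S : Type u} [Ring S] (a : S) : Prop := ∀ x : S, a * x = 0 → x = 0

/-- `a` is regular: neither a left nor a right zero divisor. -/
def Reg {S : Type u} [Ring S] (a : S) : Prop := LeftReg a ∧ RightReg a

/-- A self-map of a ring has large image: its range contains an essential
left ideal with zero right annihilator. -/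
def HasLargeImage {S : Type u} [Ring S] (f : S → S) : Prop :=
  ∃ L : Ideal S, IsEssentialLeftIdeal L ∧ RAnnZero S (L : Set S) ∧ (L : Set S) ⊆ Set.range f

/-- The left annihilator of a set, as a left ideal. -/
def lAnnIdeal (S : Type u) [Ring S] (X : Set S) : Ideal S where
  carrier := {a | ∀ x ∈ X, a * x = 0}
  add_mem' := by intro a b ha hb x hx; rw [add_mul, ha x hx, hb x hx, add_zero]
  zero_mem' := by intro x hx; rw [zero_mul]
  smul_mem' := by intro r a ha x hx; simp only [smul_eq_mul, mul_assoc, ha x hx, mul_zero]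

/-- ACC on left annihilator ideals. -/
def AccLeftAnn (S : Type u) [Ring S] : Prop :=
  ∀ X : ℕ → Set S, (∀ n, lAnnIdeal S (X n) ≤ lAnnIdeal S (X (n + 1))) →
    ∃ N, ∀ m, N ≤ m → lAnnIdeal S (X m) = lAnnIdeal S (X N)

/-- Finite uniform (Goldie) dimension on the left: no infinite independent
family of nonzero left ideals. -/
def FinUdim (S : Type u) [Ring S] : Prop :=
  ¬ ∃ f : ℕ → Ideal S, (∀ n, f n ≠ ⊥) ∧ iSupIndep f

/-- Left Goldie ring: ACC on left annihilators and finite left uniform dimension. -/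
def IsLeftGoldie (S : Type u) [Ring S] : Prop := AccLeftAnn S ∧ FinUdim S

/-- The left uniform (Goldie) dimension of `S` is at least `n`. -/
def UdimGE (S : Type u) [Ring S] (n : ℕ) : Prop :=
  ∃ f : Fin n → Ideal S, (∀ i, f i ≠ ⊥) ∧ iSupIndep f

/-- `ι : R →+* Q` realizes `Q` as a classical left quotient ring of `R`:
`ι` is injective, regular elements become units, and every element of `Q`
is a left fraction `(ι s)⁻¹ * (ι a)` with `s` regular. -/
structure IsLeftQuotRing {R : Type u} {Q : Type v} [Ring R] [Ring Q] (ι : R →+* Q) : Prop where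
  inj : Function.Injective ι
  unit : ∀ a : R, Reg a → IsUnit (ι a)
  frac : ∀ q : Q, ∃ a s : R, Reg s ∧ ι s * q = ι a

/-- An ideal (a priori only a left ideal) is two-sided. -/
def IsTwoSided {S : Type u} [Ring S] (I : Ideal S) : Prop := ∀ x ∈ I, ∀ r : S, x * r ∈ I

/-- ACC on two-sided ideals. -/
def AccTwoSided (S : Type u) [Ring S] : Prop :=
  ∀ f : ℕ → Ideal S, (∀ n, IsTwoSided (f n)) → (∀ n, f n ≤ f (n + 1)) →
    ∃ N, ∀ m, N ≤ m → f m = f N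

/-- A trivially ordered set: no strict comparabilities. -/
def TrivOrd (P : Type u) [Preorder P] : Prop := ∀ x y : P, ¬ x < y

/-- `DevLE α P` : the deviation (in the sense of Gabriel–Rentschler) of the
poset `P` is at most `α` (where trivially ordered intervals count as having
deviation `-∞`). -/
def DevLE (α : Ordinal.{v}) (P : Type u) [Preorder P] : Prop :=
  ∀ f : ℕ → P, (∀ n, f (n + 1) ≤ f n) →
    ∃ N : ℕ, ∀ n, N ≤ n →
      TrivOrd ↥(Set.Icc (f (n + 1)) (f n)) ∨
      ∃ β, ∃ _ : β < α, DevLE β ↥(Set.Icc (f (n + 1)) (f n))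
termination_by α

/-- `R` has left Krull dimension in the sense of Gabriel–Rentschler: the
poset of left ideals of `R` has deviation. -/
def HasLeftKrullDim (R : Type u) [Ring R] : Prop :=
  ∃ α : Ordinal.{u}, DevLE α (Ideal R)

/-- `(A, ι, τ)` is a Cohn–Jordan extension of `(R, σ)`: `ι : R → A` is an
injective embedding, the automorphism `τ` of `A` extends `σ`, and every
element of `A` is mapped into `R` by some positive power of `τ`. -/
structure IsCohnJordan {R A : Type u} [Ring R] [Ring A] (σ : R →+* R) (ι : R →+* A)
    (τ : A ≃+* A) : Prop where
  inj : Function.Injective ι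
  comm : ∀ r : R, τ (ι r) = ι (σ r)
  small : ∀ a : A, ∃ n : ℕ, 1 ≤ n ∧ (⇑τ)^[n] a ∈ Set.range ι

/-- If a ring endomorphism `σ` agrees with a ring automorphism `τ` on a left
ideal `L` with zero left annihilator, then `σ = τ`; in particular `σ` is an
automorphism. -/
theorem stmt0 {R : Type u} [Ring R] (L : Ideal R) (hL : LAnnZero R (L : Set R))
    (σ : R →+* R) (τ : R ≃+* R) (h : ∀ x ∈ L, σ x = τ x) :
    (∀ x : R, σ x = τ x) ∧ Function.Bijective σ := by
  have key : ∀ r : R, σ r = τ r := by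
    intro r
    have h1 : ∀ x ∈ L, (σ r - τ r) * τ x = 0 := by
      intro x hx
      have hrx : r * x ∈ L := L.mul_mem_left r hx
      have : σ (r * x) = τ (r * x) := h _ hrx
      rw [map_mul, map_mul, h x hx] at this
      rw [sub_mul, this, sub_self]
    have h2 : τ.symm (σ r - τ r) = 0 := by
      apply hL
      intro x hx
      have := h1 x hx
      have := congrArg τ.symm (h1 x hx)
      simpa using this
    have := congrArg τ (h2)
    simpa [sub_eq_zero] using this
  refine ⟨key, ?_⟩
  have : (σ : R → R) = τ := funext key
  rw [this]
  exact τ.bijective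
end

section
/- Let σ be an endomorphism of a ring R and n ≥ 1 a natural number. Then ker σ^n is strictly contained in ker σ^{n+1} if and only if σ^n(R) ∩ ker σ ≠ 0, if and only if σ^n(R) ∩ ker σ^n ≠ 0. -/
universe u v

/-- For an endomorphism `σ` of a ring `R` and `n ≥ 1`:
`ker σ^n ⊊ ker σ^(n+1)` iff `σ^n(R) ∩ ker σ ≠ 0` iff `σ^n(R) ∩ ker σ^n ≠ 0`. -/
theorem stmt1 {R : Type u} [Ring R] (σ : R →+* R) (n : ℕ) (hn : 1 ≤ n) :
    (({x : R | (⇑σ)^[n] x = 0} ⊂ {x : R | (⇑σ)^[n + 1] x = 0}) ↔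
      ∃ y : R, y ≠ 0 ∧ y ∈ Set.range (⇑σ)^[n] ∧ σ y = 0) ∧
    ((∃ y : R, y ≠ 0 ∧ y ∈ Set.range (⇑σ)^[n] ∧ σ y = 0) ↔
      ∃ y : R, y ≠ 0 ∧ y ∈ Set.range (⇑σ)^[n] ∧ (⇑σ)^[n] y = 0) := by
  constructor
  · constructor
    · rintro ⟨hsub, hne⟩
      obtain ⟨x, hx1, hx0⟩ : ∃ x, (⇑σ)^[n+1] x = 0 ∧ (⇑σ)^[n] x ≠ 0 := by
        by_contra h
        push_neg at h
        exact hne fun x hx => by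
          by_contra hc
          exact hc (h x hx)
      refine ⟨(⇑σ)^[n] x, hx0, ⟨x, rfl⟩, ?_⟩
      rw [← Function.iterate_succ_apply' σ n x]
      exact hx1
    · rintro ⟨y, hy0, ⟨x, rfl⟩, hy⟩
      constructor
      · intro z hz
        simp only [Set.mem_setOf_eq] at hz ⊢
        rw [Function.iterate_succ_apply' σ n z, hz, map_zero]
      · intro h
        have : (⇑σ)^[n+1] x = 0 := by
          rw [Function.iterate_succ_apply' σ n x]; exact hy
        exact hy0 (h this)
  · constructor
    · rintro ⟨y, hy0, hyr, hy⟩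
      refine ⟨y, hy0, hyr, ?_⟩
      obtain ⟨m, rfl⟩ := Nat.exists_eq_add_of_le hn
      rw [add_comm, Function.iterate_add_apply, Function.iterate_one, hy,
        Function.iterate_fixed (map_zero σ)]
    · rintro ⟨y, hy0, ⟨x, rfl⟩, hy⟩
      have hP : ∃ k, (⇑σ)^[k] ((⇑σ)^[n] x) = 0 := ⟨n, hy⟩
      classical
      let k := Nat.find hP
      have hk0 : (⇑σ)^[k] ((⇑σ)^[n] x) = 0 := Nat.find_spec hP
      have hkpos : 1 ≤ k := by
        rcases Nat.eq_zero_or_pos k with h | h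
        · exfalso; apply hy0
          have : (⇑σ)^[0] ((⇑σ)^[n] x) = 0 := h ▸ hk0
          simpa using this
        · exact h
      have hkm : (⇑σ)^[k-1] ((⇑σ)^[n] x) ≠ 0 := Nat.find_min hP (Nat.sub_lt hkpos one_pos)
      refine ⟨(⇑σ)^[k-1] ((⇑σ)^[n] x), hkm, ⟨(⇑σ)^[k-1] x, ?_⟩, ?_⟩
      · rw [← Function.iterate_add_apply, ← Function.iterate_add_apply, add_comm]
      · rw [← Function.iterate_succ_apply' σ (k-1), Nat.succ_eq_add_one,
          Nat.sub_add_cancel hkpos]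
        exact hk0
end

section
/- Let R be a ring satisfying the ascending chain condition on two-sided ideals, and σ an endomorphism of R. Suppose for every n ≥ 1 there exists a nonzero left ideal L of R with L ⊆ σ^n(R) and with left annihilator of L equal to zero. Then σ is injective. -/
universe u v

/-- If `R` has ACC on two-sided ideals and for every `n ≥ 1` the image of `σ^n`
contains a nonzero left ideal with zero left annihilator, then `σ` is injective. -/
theorem stmt2 {R : Type u} [Ring R] (hacc : AccTwoSided R) (σ : R →+* R)
    (h : ∀ n : ℕ, 1 ≤ n → ∃ L : Ideal R, L ≠ ⊥ ∧
      (L : Set R) ⊆ Set.range (⇑σ)^[n] ∧ LAnnZero R (L : Set R)) :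
    Function.Injective σ := by
  rw [injective_iff_map_eq_zero]
  intro a ha
  -- chain of kernels
  set f : ℕ → Ideal R := fun n => RingHom.ker (σ ^ n) with hf
  have hts : ∀ n, IsTwoSided (f n) := by
    intro n x hx r
    simp only [hf, RingHom.mem_ker] at hx ⊢
    rw [map_mul, hx, zero_mul]
  have hmono : ∀ n, f n ≤ f (n + 1) := by
    intro n x hx
    simp only [hf, RingHom.mem_ker] at hx ⊢
    rw [pow_succ', RingHom.coe_mul, Function.comp_apply, hx, map_zero]
  obtain ⟨N, hN⟩ := hacc f hts hmono
  obtain ⟨L, hL0, hLsub, hLann⟩ := h (N + 1) (by omega)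
  apply hLann
  intro x hx
  have hax : a * x ∈ L := L.mul_mem_left a hx
  obtain ⟨v, hv⟩ := hLsub hax
  have hv2 : (σ ^ (N + 2)) v = 0 := by
    have hv' : (σ ^ (N + 1)) v = a * x := by rw [RingHom.coe_pow]; exact hv
    rw [pow_succ', RingHom.coe_mul, Function.comp_apply, hv', map_mul, ha, zero_mul]
  have : v ∈ f (N + 1) := by
    have e := hN (N + 2) (by omega)
    have e' := hN (N + 1) (by omega)
    have : v ∈ f (N + 2) := hv2
    rw [e] at this; rw [← e'] at this; exact this
  have hvz : (σ ^ (N + 1)) v = 0 := this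
  calc a * x = (⇑σ)^[N + 1] v := hv.symm
    _ = (σ ^ (N + 1)) v := by rw [RingHom.coe_pow]
    _ = 0 := hvz
end

section
/- Let R be a ring satisfying the ascending chain condition on two-sided ideals, and σ an endomorphism of R. Suppose there exists a left ideal L of R with σ(L) = L such that L is essential as a left ideal of R. Then σ is injective. -/
universe u v

/-- If `R` has ACC on two-sided ideals and there is an essential left ideal `L`
of `R` with `σ(L) = L`, then `σ` is injective. -/
theorem stmt3 {R : Type u} [Ring R] (hacc : AccTwoSided R) (σ : R →+* R)
    (L : Ideal R) (hfix : ⇑σ '' (L : Set R) = (L : Set R))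
    (hess : IsEssentialLeftIdeal L) :
    Function.Injective σ := by
  -- the kernels of powers of σ form an ascending chain of two-sided ideals
  obtain ⟨N, hN⟩ := hacc (fun n => RingHom.ker (σ ^ n))
    (by
      intro n x hx r
      have hx' : (σ ^ n) x = 0 := hx
      show (σ ^ n) (x * r) = 0
      rw [map_mul, hx', zero_mul])
    (by
      intro n x hx
      have hx' : (σ ^ n) x = 0 := hx
      show (σ ^ (n + 1)) x = 0
      rw [pow_succ']
      show σ ((σ ^ n) x) = 0
      rw [hx', map_zero])
  have key := hN (N + 1) (Nat.le_succ N)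
  -- suffices to show the kernel of σ is trivial
  rw [injective_iff_map_eq_zero]
  intro a ha
  by_contra hane
  -- span{a} is a nonzero left ideal inside ker σ
  have hspan : Ideal.span {a} ≠ ⊥ := by
    intro h
    exact hane (by simpa [h] using Ideal.subset_span (Set.mem_singleton a))
  have hmeet := hess (Ideal.span {a}) hspan
  obtain ⟨b, hb, hbne⟩ := Submodule.exists_mem_ne_zero_of_ne_bot hmeet
  have hbL : b ∈ L := hb.1
  have hbker : σ b = 0 := by
    have : Ideal.span {a} ≤ RingHom.ker σ := by
      rw [Ideal.span_le]
      intro x hx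
      rw [Set.mem_singleton_iff] at hx
      subst hx
      exact ha
    exact this hb.2
  -- σ^n(L) = L for all n
  have hfixn : ∀ n : ℕ, ⇑(σ ^ n) '' (L : Set R) = (L : Set R) := by
    intro n
    induction n with
    | zero => simp
    | succ n ih =>
      rw [pow_succ']
      show ⇑σ ∘ ⇑(σ ^ n) '' (L : Set R) = (L : Set R)
      rw [Set.image_comp, ih, hfix]
  -- lift b along σ^N
  have hbmem : b ∈ ⇑(σ ^ N) '' (L : Set R) := (hfixn N).symm ▸ hbL
  obtain ⟨c, _, hc⟩ := hbmem
  have hc1 : c ∈ RingHom.ker (σ ^ (N + 1)) := by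
    show (σ ^ (N + 1)) c = 0
    rw [pow_succ']
    show σ ((σ ^ N) c) = 0
    rw [hc, hbker]
  rw [key] at hc1
  have : (σ ^ N) c = 0 := hc1
  exact hbne (hc ▸ this)
end

section
/- Let T be a subring of a prime ring R containing a left ideal L of R with right annihilator of L in R equal to zero. Then T is a prime ring. -/
universe u v

/-- A subring `T` of a prime ring `R` containing a left ideal `L` of `R`
with zero right annihilator is itself a prime ring. -/
theorem stmt6 {R : Type u} [Ring R] (hprime : IsPrimeRingE R) (T : Subring R)
    (L : Ideal R) (hLT : (L : Set R) ⊆ (T : Set R)) (hr : RAnnZero R (L : Set R)) :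
    IsPrimeRingE ↥T := by
  obtain ⟨hnt, hp⟩ := hprime
  refine ⟨⟨0, 1, ?_⟩, ?_⟩
  · intro h
    exact zero_ne_one (α := R) (congrArg Subtype.val h)
  · intro a b h
    by_cases ha : (a : R) = 0
    · exact Or.inl (Subtype.ext ha)
    · right
      apply Subtype.ext
      refine hr (b : R) fun x hx => ?_
      have hxb := hp (a : R) (x * (b : R)) fun r => by
        have hrx : r * x ∈ L := L.smul_mem r hx
        have h2 := h ⟨r * x, hLT hrx⟩
        have h3 : (a : R) * (r * x) * (b : R) = 0 := congrArg Subtype.val h2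
        calc (a : R) * r * (x * (b : R)) = (a : R) * (r * x) * (b : R) := by
              rw [mul_assoc, mul_assoc, mul_assoc]
          _ = 0 := h3
      exact hxb.resolve_left ha
end

section
/- Let T be a subring of a ring R containing an essential left ideal L of R with right annihilator of L equal to zero. Then the uniform (Goldie) dimension of T as a left T-module equals the uniform dimension of R as a left R-module. -/
universe u v

/-! Nonzero independent families of left ideals can be moved between `R` and `T` in both
directions. A family `(Iᵢ)` of `R` gives the left ideals `L ∩ Iᵢ` of `T`, nonzero because `L` is
essential; a family `(Jᵢ)` of `T` gives the left ideals `L Jᵢ` of `R`, nonzero because `L` has zero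
right annihilator, and contained in `Jᵢ` because `L ⊆ T`. In both cases each new ideal lies inside
the corresponding old one as an additive group, and independence only asks that finite sums of
members vanish termwise, so it is inherited. -/

open scoped Pointwise

section Independence

variable {ι A B M N : Type*} [Ring A] [Ring B] [AddCommGroup M] [AddCommGroup N]
  [Module A M] [Module B N] {p : ι → Submodule A M} {q : ι → Submodule B N}

theorem iSupIndep.of_map_mem (hq : iSupIndep q) (φ : M →+ N) (hφ : Function.Injective φ)
    (h : ∀ i, ∀ x ∈ p i, φ x ∈ q i) : iSupIndep p := by
  rw [iSupIndep_iff_finsetSum_eq_zero_imp_eq_zero] at hq ⊢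
  intro s v hv hsum i hi
  apply hφ
  rw [map_zero]
  exact hq s (φ ∘ v) (fun j hj ↦ h j _ (hv j hj)) (by simp [← map_sum, hsum]) i hi

theorem iSupIndep.of_mem_map (hq : iSupIndep q) (φ : N →+ M) (hφ : Function.Injective φ)
    (h : ∀ i, ∀ x ∈ p i, ∃ y ∈ q i, φ y = x) : iSupIndep p := by
  choose! w hwq hwφ using h
  rw [iSupIndep_iff_finsetSum_eq_zero_imp_eq_zero] at hq ⊢
  intro s v hv hsum i hi
  have hsum' : ∑ j ∈ s, w j (v j) = 0 := hφ <| by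
    rw [map_sum, map_zero, ← hsum]
    exact Finset.sum_congr rfl fun j hj ↦ hwφ j _ (hv j hj)
  rw [← hwφ i _ (hv i hi), hq s (fun j ↦ w j (v j)) (fun j hj ↦ hwq j _ (hv j hj)) hsum' i hi,
    map_zero]

end Independence

section Subring

variable {R : Type u} [Ring R] {T : Subring R} {L : Ideal R}

def Ideal.spanMulSubring (L : Ideal R) (J : Ideal T) : Ideal R :=
  Ideal.span ((L : Set R) * (Subtype.val '' (J : Set T)))

theorem Ideal.exists_mem_of_mem_spanMulSubring (hLT : (L : Set R) ⊆ T) {J : Ideal T} {x : R}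
    (hx : x ∈ L.spanMulSubring J) : ∃ y ∈ J, (y : R) = x := by
  -- The generating set is stable under left multiplication by `R`, and its elements lie in `J`.
  have hle : (L.spanMulSubring J).toAddSubmonoid ≤
      (J.toAddSubmonoid).map (T.subtype : T →+ R) := by
    rw [Ideal.spanMulSubring, Submodule.span_eq_closure, AddSubmonoid.closure_le]
    rintro _ ⟨r, -, _, ⟨l, hl, _, ⟨t, ht, rfl⟩, rfl⟩, rfl⟩
    exact ⟨⟨r * l, hLT (L.mul_mem_left r hl)⟩ * t, J.mul_mem_left _ ht, by simp [mul_assoc]⟩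
  exact hle hx

theorem Ideal.spanMulSubring_ne_bot (hr : RAnnZero R (L : Set R)) {J : Ideal T} (hJ : J ≠ ⊥) :
    L.spanMulSubring J ≠ ⊥ := by
  obtain ⟨t, ht, ht0⟩ := (Submodule.ne_bot_iff J).mp hJ
  obtain ⟨l, hl, hlt⟩ : ∃ l ∈ L, l * (t : R) ≠ 0 := by
    by_contra! h
    exact ht0 (Subtype.ext (hr _ h))
  exact (Submodule.ne_bot_iff _).mpr
    ⟨l * t, Ideal.subset_span (Set.mul_mem_mul hl ⟨t, ht, rfl⟩), hlt⟩

theorem Ideal.comap_subtype_inf_ne_bot (hLT : (L : Set R) ⊆ T) (hess : IsEssentialLeftIdeal L)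
    {I : Ideal R} (hI : I ≠ ⊥) : (L ⊓ I).comap T.subtype ≠ ⊥ := by
  obtain ⟨x, hx, hx0⟩ := (Submodule.ne_bot_iff _).mp (hess I hI)
  refine (Submodule.ne_bot_iff _).mpr ⟨⟨x, hLT hx.1⟩, hx, fun h ↦ hx0 ?_⟩
  simpa using congrArg Subtype.val h

theorem exists_iSupIndep_of_iSupIndep_subring (hLT : (L : Set R) ⊆ T)
    (hr : RAnnZero R (L : Set R)) {ι : Type*} {J : ι → Ideal T} (hJ0 : ∀ i, J i ≠ ⊥)
    (hJ : iSupIndep J) : ∃ I : ι → Ideal R, (∀ i, I i ≠ ⊥) ∧ iSupIndep I :=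
  ⟨fun i ↦ L.spanMulSubring (J i), fun i ↦ Ideal.spanMulSubring_ne_bot hr (hJ0 i),
    hJ.of_mem_map (T.subtype : T →+ R) Subtype.val_injective
      fun _ _ hx ↦ Ideal.exists_mem_of_mem_spanMulSubring hLT hx⟩

theorem exists_iSupIndep_subring_of_iSupIndep (hLT : (L : Set R) ⊆ T)
    (hess : IsEssentialLeftIdeal L) {ι : Type*} {I : ι → Ideal R} (hI0 : ∀ i, I i ≠ ⊥)
    (hI : iSupIndep I) :
    ∃ J : ι → Ideal T, (∀ i, J i ≠ ⊥) ∧ iSupIndep J :=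
  ⟨fun i ↦ (L ⊓ I i).comap T.subtype, fun i ↦ Ideal.comap_subtype_inf_ne_bot hLT hess (hI0 i),
    hI.of_map_mem (T.subtype : T →+ R) Subtype.val_injective fun _ _ hx ↦ hx.2⟩

end Subring

/-- If a subring `T` of `R` contains an essential left ideal `L` of `R` with
zero right annihilator, then the left uniform (Goldie) dimension of `T`
equals that of `R`. -/
theorem stmt7 {R : Type u} [Ring R] (T : Subring R) (L : Ideal R)
    (hLT : (L : Set R) ⊆ (T : Set R)) (hess : IsEssentialLeftIdeal L)
    (hr : RAnnZero R (L : Set R)) :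
    ∀ n : ℕ, UdimGE ↥T n ↔ UdimGE R n :=
  fun _ ↦ ⟨fun ⟨_, hJ0, hJ⟩ ↦ exists_iSupIndep_of_iSupIndep_subring hLT hr hJ0 hJ,
    fun ⟨_, hI0, hI⟩ ↦ exists_iSupIndep_subring_of_iSupIndep hLT hess hI0 hI⟩
end

section
/- Let R be a semiprime left Goldie ring and T a subring of R containing an essential left ideal L of R with right annihilator zero. Then T is a semiprime left Goldie ring and the classical left quotient rings of T and R coincide. -/
universe u v

/-! For `a ∈ T` with `aTa = 0` and `l ∈ L` one has `(la)R(la) = l(a(Rl)a) = 0`, so `La = 0` and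
`a = 0`; a left annihilator in `T` is the trace of a left annihilator in `R`; and a nonzero left
ideal `I` of `T` contains a nonzero left ideal of `R`, namely `LI`. So `T` is semiprime left Goldie.
The quotient rings coincide by Goldie's theory for `R` (zero left singular ideal, regular
elements in essential left ideals): regular elements of `T` stay regular in `R`, and every
fraction over `R` can be rewritten with numerator and denominator in `L ⊆ T`. -/
section Lattice

theorem iSupIndep_of_disjoint_iSup_gt {α : Type*} [CompleteLattice α] [IsModularLattice α]
    [IsCompactlyGenerated α] {f : ℕ → α} (h : ∀ m, Disjoint (f m) (⨆ k > m, f k)) :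
    iSupIndep f := by
  refine iSupIndep_iff_supIndep.2 fun s => ?_
  induction s using Finset.induction_on_min with
  | empty => exact Finset.supIndep_empty f
  | insert a s has ih =>
    exact ih.insert <| (h a).mono_right <| Finset.sup_le fun k hk =>
      le_iSup₂_of_le (f := fun k (_ : k > a) => f k) k (has k hk) le_rfl

theorem LinearMap.iSupIndep_map_pow {R M : Type*} [Ring R] [AddCommGroup M] [Module R M]
    {φ : M →ₗ[R] M} (hφ : Function.Injective φ) {J : Submodule R M}
    (hJ : Disjoint J (LinearMap.range φ)) : iSupIndep fun k : ℕ => J.map (φ ^ k) := by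
  refine iSupIndep_of_disjoint_iSup_gt fun m => ?_
  have hle : ⨆ k > m, J.map (φ ^ k) ≤ (LinearMap.range φ).map (φ ^ m) := by
    refine iSup₂_le fun k hk => ?_
    obtain ⟨j, rfl⟩ := Nat.exists_eq_add_of_lt hk
    rw [add_assoc, pow_add, pow_succ', Module.End.mul_eq_comp, Module.End.mul_eq_comp,
      Submodule.map_comp, Submodule.map_comp]
    exact Submodule.map_mono LinearMap.map_le_range
  have hinj : Function.Injective (φ ^ m) := by
    rw [Module.End.coe_pow]; exact hφ.iterate m
  refine Disjoint.mono_right hle ?_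
  rw [disjoint_iff, ← Submodule.map_inf _ hinj, hJ.eq_bot, Submodule.map_bot]

end Lattice

section Essential

variable {R : Type u} [Ring R]

@[simp]
theorem mem_lAnnIdeal_singleton {x c : R} : c ∈ lAnnIdeal R {x} ↔ c * x = 0 := by
  simp [lAnnIdeal]

theorem lAnnIdeal_singleton_le_mul (a b : R) : lAnnIdeal R {a} ≤ lAnnIdeal R {a * b} :=
  fun c hc => by rw [mem_lAnnIdeal_singleton, ← mul_assoc, mem_lAnnIdeal_singleton.1 hc, zero_mul]

theorem isEssentialLeftIdeal_iff {M : Ideal R} :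
    IsEssentialLeftIdeal M ↔ ∀ x : R, x ≠ 0 → ∃ r : R, r * x ∈ M ∧ r * x ≠ 0 := by
  constructor
  · intro h x hx
    have hspan : Ideal.span {x} ≠ ⊥ := by simpa using hx
    obtain ⟨y, ⟨hyM, hyx⟩, hy0⟩ := Submodule.exists_mem_ne_zero_of_ne_bot (h _ hspan)
    obtain ⟨r, rfl⟩ := Ideal.mem_span_singleton'.1 hyx
    exact ⟨r, hyM, hy0⟩
  · intro h I hI
    obtain ⟨x, hxI, hx0⟩ := Submodule.exists_mem_ne_zero_of_ne_bot hI
    obtain ⟨r, hrM, hr0⟩ := h x hx0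
    exact Submodule.ne_bot_iff _ |>.2 ⟨r * x, ⟨hrM, I.mul_mem_left r hxI⟩, hr0⟩

theorem IsEssentialLeftIdeal.mono {M N : Ideal R} (hM : IsEssentialLeftIdeal M) (h : M ≤ N) :
    IsEssentialLeftIdeal N :=
  fun I hI hN => hM I hI (eq_bot_iff.2 (hN ▸ inf_le_inf_right I h))

theorem IsEssentialLeftIdeal.inf {M N : Ideal R} (hM : IsEssentialLeftIdeal M)
    (hN : IsEssentialLeftIdeal N) : IsEssentialLeftIdeal (M ⊓ N) := by
  intro I hI
  rw [inf_assoc]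
  exact hM _ (hN I hI)

theorem IsEssentialLeftIdeal.comap_mulRight {M : Ideal R} (hM : IsEssentialLeftIdeal M) (r : R) :
    IsEssentialLeftIdeal (Submodule.comap (LinearMap.toSpanSingleton R R r) M) := by
  rw [isEssentialLeftIdeal_iff] at hM ⊢
  intro x hx
  simp only [Submodule.mem_comap, LinearMap.toSpanSingleton_apply, smul_eq_mul]
  by_cases hxr : x * r = 0
  · exact ⟨1, by simp [hxr], by simpa using hx⟩
  · obtain ⟨s, hsM, hs0⟩ := hM (x * r) hxr
    exact ⟨s, by rwa [mul_assoc], fun h => hs0 (by rw [← mul_assoc, h, zero_mul])⟩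

end Essential

section Semiprime

variable {R : Type u} [Ring R]

theorem IsNilpotent.of_mul_swap {x y : R} (h : IsNilpotent (y * x)) : IsNilpotent (x * y) := by
  obtain ⟨n, hn⟩ := h
  exact ⟨n + 1, by rw [_root_.pow_succ, ← mul_assoc, mul_pow_mul, hn, mul_zero, zero_mul]⟩

theorem AccLeftAnn.exists_maximal (hacc : AccLeftAnn R) {α : Type*} [Nonempty α]
    (G : α → Set R) : ∃ a : α, ∀ b : α, lAnnIdeal R (G a) ≤ lAnnIdeal R (G b) →
      lAnnIdeal R (G b) = lAnnIdeal R (G a) := by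
  by_contra! h
  choose g hle hne using h
  obtain ⟨a₀⟩ := ‹Nonempty α›
  have hstep : ∀ n, g^[n + 1] a₀ = g (g^[n] a₀) := fun n => Function.iterate_succ_apply' g n a₀
  obtain ⟨N, hN⟩ := hacc (fun n => G (g^[n] a₀)) fun n => hstep n ▸ hle _
  exact hne _ (hstep N ▸ hN (N + 1) N.le_succ)

theorem AccLeftAnn.exists_pow_stable (hacc : AccLeftAnn R) (y : R) :
    ∃ n ≠ 0, ∀ z : R, z * y ^ n * y ^ n = 0 → z * y ^ n = 0 := by
  obtain ⟨N, hN⟩ := hacc (fun k => {y ^ (k + 1)}) fun k c hc => by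
    simp only [mem_lAnnIdeal_singleton] at hc ⊢
    rw [pow_succ _ (k + 1), ← mul_assoc, hc, zero_mul]
  refine ⟨N + 1, N.succ_ne_zero, fun z hz => ?_⟩
  have hmem : z ∈ lAnnIdeal R {y ^ (N + 1 + N + 1)} := by
    rwa [mem_lAnnIdeal_singleton, add_assoc, pow_add, ← mul_assoc]
  rwa [hN _ (by omega), mem_lAnnIdeal_singleton] at hmem

/-- If `J` were nil: among the nonzero products `x s` with `x ∈ J` take `a` with maximal left
annihilator, and `r` with `a r a ≠ 0`. Maximality gives `lAnn (a (r a)ᵏ) = lAnn a`, hence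
inductively `a (r a)ᵏ ≠ 0`, although `a r` is nilpotent. -/
theorem exists_not_isNilpotent_of_ne_bot (hsp : IsSemiprimeRing R) (hacc : AccLeftAnn R)
    {J : Ideal R} (hJ : J ≠ ⊥) : ∃ y ∈ J, ¬ IsNilpotent y := by
  by_contra! hnil
  let P := {y : R // y ≠ 0 ∧ ∃ x ∈ J, ∃ s, x * s = y}
  obtain ⟨y₀, hy₀J, hy₀⟩ := Submodule.exists_mem_ne_zero_of_ne_bot hJ
  have : Nonempty P := ⟨⟨y₀, hy₀, y₀, hy₀J, 1, mul_one _⟩⟩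
  obtain ⟨⟨a, ha0, x, hxJ, s, rfl⟩, hmax⟩ := hacc.exists_maximal fun y : P => {y.1}
  obtain ⟨r, hr⟩ : ∃ r, x * s * r * (x * s) ≠ 0 := by
    by_contra! h
    exact ha0 (hsp _ h)
  have hne : ∀ k, x * s * (r * (x * s)) ^ k ≠ 0 := by
    intro k
    induction k with
    | zero => simpa using ha0
    | succ k ih =>
      have heq := hmax ⟨_, ih, x, hxJ, s * (r * (x * s)) ^ k, (mul_assoc _ _ _).symm⟩
        (lAnnIdeal_singleton_le_mul _ _)
      have hnot : x * s * r ∉ lAnnIdeal R {x * s * (r * (x * s)) ^ k} := by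
        rw [heq]; simpa using hr
      rw [mem_lAnnIdeal_singleton] at hnot
      simpa only [pow_succ', mul_assoc] using hnot
  obtain ⟨n, hn⟩ := (hnil _ (J.mul_mem_left (s * r) hxJ)).of_mul_swap
  exact hne n (by rw [← mul_pow_mul, mul_assoc, hn, zero_mul])

end Semiprime

section Goldie

def leftSingularIdeal (R : Type u) [Ring R] : Ideal R where
  carrier := {x | IsEssentialLeftIdeal (lAnnIdeal R {x})}
  add_mem' {a b} ha hb := (ha.inf hb).mono fun c ⟨hca, hcb⟩ => by
    rw [SetLike.mem_coe, mem_lAnnIdeal_singleton] at hca hcb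
    rw [mem_lAnnIdeal_singleton, mul_add, hca, hcb, add_zero]
  zero_mem' := isEssentialLeftIdeal_iff.2 fun x hx => ⟨1, by simp, by simpa using hx⟩
  smul_mem' r a ha := (ha.comap_mulRight r).mono fun c hc => by
    simpa [mul_assoc] using hc

variable {R : Type u} [Ring R]

theorem isNilpotent_of_mem_leftSingularIdeal (hacc : AccLeftAnn R) {y : R}
    (hy : y ∈ leftSingularIdeal R) : IsNilpotent y := by
  obtain ⟨n, hn, hstable⟩ := hacc.exists_pow_stable y
  refine ⟨n, by_contra fun hy0 => ?_⟩
  have hess : IsEssentialLeftIdeal (lAnnIdeal R {y ^ n}) := by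
    refine IsEssentialLeftIdeal.mono hy ?_
    obtain ⟨k, rfl⟩ := Nat.exists_eq_succ_of_ne_zero hn
    rw [pow_succ']
    exact lAnnIdeal_singleton_le_mul y _
  obtain ⟨s, hs, hs0⟩ := isEssentialLeftIdeal_iff.1 hess _ hy0
  exact hs0 (hstable s (mem_lAnnIdeal_singleton.1 hs))

theorem leftSingularIdeal_eq_bot (hsp : IsSemiprimeRing R) (hacc : AccLeftAnn R) :
    leftSingularIdeal R = ⊥ := by
  by_contra h
  obtain ⟨y, hy, hnil⟩ := exists_not_isNilpotent_of_ne_bot hsp hacc h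
  exact hnil (isNilpotent_of_mem_leftSingularIdeal hacc hy)

theorem isEssentialLeftIdeal_span_singleton (hud : FinUdim R) {t : R} (ht : LeftReg t) :
    IsEssentialLeftIdeal (Ideal.span {t}) := by
  intro J hJ hdisj
  set φ := LinearMap.toSpanSingleton R R t
  have hφ : Function.Injective φ := (injective_iff_map_eq_zero φ).2 ht
  refine hud ⟨fun k => Submodule.map (φ ^ k) J, fun k hk => hJ ?_,
    LinearMap.iSupIndep_map_pow hφ ?_⟩
  · have hφk : Function.Injective (φ ^ k) := by
      rw [Module.End.coe_pow]; exact hφ.iterate k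
    exact Submodule.map_injective_of_injective hφk (hk.trans (Submodule.map_bot _).symm)
  · rw [disjoint_iff, ← LinearMap.span_singleton_eq_range, inf_comm]
    exact hdisj

theorem reg_of_leftReg (hsp : IsSemiprimeRing R) (hg : IsLeftGoldie R) {t : R}
    (ht : LeftReg t) : Reg t := by
  refine ⟨ht, fun x hx => ?_⟩
  have hsing : x ∈ leftSingularIdeal R :=
    (isEssentialLeftIdeal_span_singleton hg.2 ht).mono <| Ideal.span_le.2 <| by simpa using hx
  rwa [leftSingularIdeal_eq_bot hsp hg.1, Submodule.mem_bot] at hsing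

theorem exists_stable_mem_ne_zero (hsp : IsSemiprimeRing R) (hacc : AccLeftAnn R)
    {J : Ideal R} (hJ : J ≠ ⊥) : ∃ d ∈ J, d ≠ 0 ∧ ∀ z : R, z * d * d = 0 → z * d = 0 := by
  obtain ⟨y, hyJ, hy⟩ := exists_not_isNilpotent_of_ne_bot hsp hacc hJ
  obtain ⟨n, hn, hstable⟩ := hacc.exists_pow_stable y
  exact ⟨y ^ n, J.pow_mem_of_mem hyJ n (Nat.pos_of_ne_zero hn), fun h => hy ⟨n, h⟩, hstable⟩

theorem iSupIndep_span_singleton_of_mul_eq_zero {c : ℕ → R}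
    (hlt : ∀ i j, i < j → c j * c i = 0) (hstable : ∀ i z, z * c i * c i = 0 → z * c i = 0) :
    iSupIndep fun n => Ideal.span {c n} := by
  refine iSupIndep_of_disjoint_iSup_gt fun m => ?_
  have hle : ⨆ k > m, Ideal.span {c k} ≤ lAnnIdeal R {c m} :=
    iSup₂_le fun k hk => Ideal.span_le.2 <| by simpa using hlt m k hk
  refine Submodule.disjoint_def.2 fun x hx hx' => ?_
  obtain ⟨r, rfl⟩ := Ideal.mem_span_singleton'.1 hx
  exact hstable m r (mem_lAnnIdeal_singleton.1 (hle hx'))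

def lAnnChain (g : Ideal R → R) : ℕ → Ideal R
  | 0 => ⊤
  | n + 1 => lAnnChain g n ⊓ lAnnIdeal R {g (lAnnChain g n)}

theorem mem_lAnnChain {g : Ideal R → R} {n : ℕ} {x : R} :
    x ∈ lAnnChain g n ↔ ∀ i < n, x * g (lAnnChain g i) = 0 := by
  induction n with
  | zero => simp [lAnnChain]
  | succ n ih =>
    simp only [lAnnChain, Submodule.mem_inf, ih, mem_lAnnIdeal_singleton, Nat.lt_succ_iff_lt_or_eq,
      or_imp, forall_and, forall_eq]

/-- Goldie: pick `cₙ ∈ E ∩ lAnn(c₀, …, cₙ₋₁)` nonzero with `lAnn cₙ² = lAnn cₙ`; the left ideals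
`R cₙ` are independent, so finite uniform dimension stops the process, and then `∑ cᵢ` is
left regular. -/
theorem exists_leftReg_mem (hsp : IsSemiprimeRing R) (hg : IsLeftGoldie R) {E : Ideal R}
    (hE : IsEssentialLeftIdeal E) : ∃ c ∈ E, LeftReg c := by
  have hchoice : ∀ A : Ideal R, ∃ d ∈ E ⊓ A, (A ≠ ⊥ → d ≠ 0) ∧
      ∀ z : R, z * d * d = 0 → z * d = 0 := by
    intro A
    by_cases hA : A = ⊥
    · exact ⟨0, zero_mem _, fun h => (h hA).elim, by simp⟩
    · obtain ⟨d, hd, hd0, hstable⟩ := exists_stable_mem_ne_zero hsp hg.1 (hE A hA)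
      exact ⟨d, hd, fun _ => hd0, hstable⟩
  choose g hgmem hg0 hgstable using hchoice
  set c : ℕ → R := fun n => g (lAnnChain g n)
  have hind : iSupIndep fun n => Ideal.span {c n} :=
    iSupIndep_span_singleton_of_mul_eq_zero
      (fun i j hij => mem_lAnnChain.1 (Submodule.mem_inf.1 (hgmem _)).2 i hij)
      (fun i => hgstable _)
  obtain ⟨n, hn⟩ : ∃ n, lAnnChain g n = ⊥ := by
    by_contra! h
    exact hg.2 ⟨_, fun n => by simpa using hg0 _ (h n), hind⟩
  refine ⟨∑ i ∈ Finset.range n, c i,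
    Submodule.sum_mem _ fun i _ => (Submodule.mem_inf.1 (hgmem _)).1, fun x hx => ?_⟩
  have hkill := (iSupIndep_iff_finsetSum_eq_zero_imp_eq_zero _).1 hind (Finset.range n)
    (fun i => x * c i) (fun i _ => Ideal.mul_mem_left _ x (Ideal.subset_span rfl))
    (by rw [← Finset.mul_sum, hx])
  have hxB : x ∈ lAnnChain g n := mem_lAnnChain.2 fun i hi => hkill i (Finset.mem_range.2 hi)
  rwa [hn, Submodule.mem_bot] at hxB

end Goldie

section Subring

variable {R : Type u} [Ring R] {T : Subring R} {L : Ideal R}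

theorem Reg.mul {a b : R} (ha : Reg a) (hb : Reg b) : Reg (a * b) :=
  ⟨fun x hx => ha.1 x (hb.1 _ (by rwa [mul_assoc])),
    fun x hx => hb.2 x (ha.2 _ (by rwa [mul_assoc] at hx))⟩

theorem Subring.reg_of_reg_coe {a : T} (ha : Reg (a : R)) : Reg a :=
  ⟨fun x hx => Subtype.ext (ha.1 x (congrArg Subtype.val hx)),
    fun x hx => Subtype.ext (ha.2 x (congrArg Subtype.val hx))⟩

theorem Subring.leftReg_coe (hLT : (L : Set R) ⊆ T) (hess : IsEssentialLeftIdeal L) {a : T}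
    (ha : LeftReg a) : LeftReg (a : R) := by
  intro y hy
  by_contra hy0
  obtain ⟨r, hrL, hr0⟩ := isEssentialLeftIdeal_iff.1 hess y hy0
  have hzero : (⟨r * y, hLT hrL⟩ : T) * a = 0 :=
    Subtype.ext (by simp [mul_assoc, hy])
  exact hr0 (congrArg Subtype.val (ha _ hzero))

theorem Subring.isSemiprimeRing (hsp : IsSemiprimeRing R) (hLT : (L : Set R) ⊆ T)
    (hr : RAnnZero R L) : IsSemiprimeRing T := by
  intro a ha
  refine Subtype.ext (hr _ fun l hl => hsp _ fun r => ?_)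
  have hrl : (a : R) * (r * l) * a = 0 :=
    congrArg Subtype.val (ha ⟨r * l, hLT (L.mul_mem_left r hl)⟩)
  calc l * a * r * (l * a) = l * ((a : R) * (r * l) * a) := by simp only [mul_assoc]
    _ = 0 := by rw [hrl, mul_zero]

/-- For `X ⊆ T`, the left annihilator of `X` in `T` is the trace on `T` of the left annihilator
in `R` of its own right annihilator `Y`; these `R`-annihilators increase with the `T`-ones. -/
theorem Subring.accLeftAnn (hacc : AccLeftAnn R) (T : Subring R) : AccLeftAnn T := by
  intro X hX
  let Y : ℕ → Set R := fun n => {z | ∀ a ∈ lAnnIdeal T (X n), (a : R) * z = 0}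
  have hY : ∀ n (t : T), t ∈ lAnnIdeal T (X n) ↔ (t : R) ∈ lAnnIdeal R (Y n) := by
    refine fun n t => ⟨fun ht z hz => hz t ht, fun ht x hx => Subtype.ext ?_⟩
    exact ht x fun a ha => congrArg Subtype.val (ha x hx)
  obtain ⟨N, hN⟩ := hacc Y fun n c hc z hz => hc z fun a ha => hz a (hX n ha)
  exact ⟨N, fun m hm => Ideal.ext fun t => by rw [hY, hY, hN m hm]⟩

/-- `{a | R a ⊆ I}`, the largest left ideal of `R` inside `I`. -/
def Subring.idealCore (I : Ideal T) : Ideal R where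
  carrier := {a | ∀ s : R, ∃ t ∈ I, (t : R) = s * a}
  add_mem' {a b} ha hb s := by
    obtain ⟨t, ht, hta⟩ := ha s
    obtain ⟨t', ht', htb⟩ := hb s
    exact ⟨t + t', I.add_mem ht ht', by rw [Subring.coe_add, hta, htb, mul_add]⟩
  zero_mem' _ := ⟨0, I.zero_mem, by simp⟩
  smul_mem' r a ha s := by
    obtain ⟨t, ht, hta⟩ := ha (s * r)
    exact ⟨t, ht, by rw [hta, smul_eq_mul, mul_assoc]⟩

theorem Subring.mul_mem_idealCore (hLT : (L : Set R) ⊆ T) {I : Ideal T} {l : R} (hl : l ∈ L)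
    {x : T} (hx : x ∈ I) : l * x ∈ T.idealCore I :=
  fun s => ⟨⟨s * l, hLT (L.mul_mem_left s hl)⟩ * x, I.mul_mem_left _ hx, (mul_assoc _ _ _)⟩

theorem Subring.iSupIndep_idealCore {ι : Type*} {f : ι → Ideal T} (hf : iSupIndep f) :
    iSupIndep fun i => T.idealCore (f i) := by
  rw [iSupIndep_iff_finsetSum_eq_zero_imp_eq_zero] at hf ⊢
  intro s v hv hsum i hi
  have hlift : ∀ j, ∃ t ∈ f j, j ∈ s → (t : R) = v j := by
    intro j
    by_cases hj : j ∈ s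
    · obtain ⟨t, ht, htv⟩ := hv j hj 1
      exact ⟨t, ht, fun _ => htv.trans (one_mul _)⟩
    · exact ⟨0, zero_mem _, fun h => (hj h).elim⟩
  choose w hw hwv using hlift
  have hwsum : ∑ j ∈ s, w j = 0 := Subtype.ext <| by
    push_cast
    rw [Finset.sum_congr rfl hwv, hsum]
  rw [← hwv i hi, hf s w (fun j _ => hw j) hwsum i hi, ZeroMemClass.coe_zero]

theorem Subring.finUdim (hud : FinUdim R) (hLT : (L : Set R) ⊆ T) (hr : RAnnZero R L) :
    FinUdim T := by
  rintro ⟨f, hf0, hf⟩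
  refine hud ⟨fun n => T.idealCore (f n), fun n h => ?_, Subring.iSupIndep_idealCore hf⟩
  obtain ⟨x, hx, hx0⟩ := Submodule.exists_mem_ne_zero_of_ne_bot (hf0 n)
  refine hx0 (Subtype.ext (hr _ fun l hl => ?_))
  simpa [h] using Subring.mul_mem_idealCore hLT hl hx

/-- A left fraction `s⁻¹ a` over `R` is rewritten over `T` as `(c s)⁻¹ (c a)`, where `c` is a
regular element of the essential left ideal `{c | c s ∈ L ∧ c a ∈ L}`. -/
theorem IsLeftQuotRing.comp_subtype (hsp : IsSemiprimeRing R) (hg : IsLeftGoldie R)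
    (hLT : (L : Set R) ⊆ T) (hess : IsEssentialLeftIdeal L) {Q : Type v} [Ring Q]
    {ι : R →+* Q} (hQ : IsLeftQuotRing ι) : IsLeftQuotRing (ι.comp T.subtype) where
  inj := hQ.inj.comp Subtype.val_injective
  unit a ha := hQ.unit _ (reg_of_leftReg hsp hg (Subring.leftReg_coe hLT hess ha.1))
  frac q := by
    obtain ⟨a, s, hs, hsq⟩ := hQ.frac q
    obtain ⟨c, hc, hcreg⟩ := exists_leftReg_mem hsp hg
      ((hess.comap_mulRight s).inf (hess.comap_mulRight a))
    simp only [Submodule.mem_inf, Submodule.mem_comap, LinearMap.toSpanSingleton_apply,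
      smul_eq_mul] at hc
    refine ⟨⟨c * a, hLT hc.2⟩, ⟨c * s, hLT hc.1⟩,
      Subring.reg_of_reg_coe ((reg_of_leftReg hsp hg hcreg).mul hs), ?_⟩
    simp only [RingHom.coe_comp, Function.comp_apply, Subring.coe_subtype, map_mul, mul_assoc,
      hsq]

end Subring

/-- If `R` is a semiprime left Goldie ring and `T` is a subring containing an
essential left ideal `L` of `R` with zero right annihilator, then `T` is a
semiprime left Goldie ring and the classical left quotient rings of `T` and
`R` coincide. -/
theorem stmt8 {R : Type u} [Ring R] (hsp : IsSemiprimeRing R) (hg : IsLeftGoldie R)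
    (T : Subring R) (L : Ideal R) (hLT : (L : Set R) ⊆ (T : Set R))
    (hess : IsEssentialLeftIdeal L) (hr : RAnnZero R (L : Set R)) :
    IsSemiprimeRing ↥T ∧ IsLeftGoldie ↥T ∧
    ∀ (Q : Type v) [Ring Q] (ι : R →+* Q), IsLeftQuotRing ι →
      IsLeftQuotRing (ι.comp T.subtype) :=
  ⟨Subring.isSemiprimeRing hsp hLT hr, ⟨Subring.accLeftAnn hg.1 T, Subring.finUdim hg.2 hLT hr⟩,
    fun _ _ _ hQ => hQ.comp_subtype hsp hg hLT hess⟩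
end

section
/- Let σ be an injective endomorphism of a ring R having a large image. Then σ maps left regular elements of R to left regular elements of R. -/
universe u v

/-- An injective endomorphism with large image maps left regular elements
to left regular elements. -/
theorem stmt11 {R : Type u} [Ring R] (σ : R →+* R) (hinj : Function.Injective σ)
    (hli : HasLargeImage ⇑σ) :
    ∀ a : R, LeftReg a → LeftReg (σ a) := by
  obtain ⟨L, hess, _, hsub⟩ := hli
  intro a ha x hx
  by_contra hx0
  have hspan : Ideal.span ({x} : Set R) ≠ ⊥ := by
    simp only [ne_eq, Ideal.span_eq_bot, Set.mem_singleton_iff, forall_eq]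
    exact hx0
  obtain ⟨y, hy, hy0⟩ := Submodule.ne_bot_iff _ |>.mp (hess _ hspan)
  obtain ⟨hyL, hyx⟩ := Submodule.mem_inf.mp hy
  obtain ⟨b, hb⟩ := hsub hyL
  obtain ⟨r, hr⟩ := Submodule.mem_span_singleton.mp hyx
  have h1 : σ b * σ a = 0 := by
    rw [hb, ← hr, smul_eq_mul, mul_assoc, hx, mul_zero]
  have h2 : b * a = 0 := hinj (by rw [map_mul, h1, map_zero])
  have h3 : b = 0 := ha b h2
  exact hy0 (by rw [← hb, h3, map_zero])
end

section
/- Let σ be an injective endomorphism of a ring R, A = A(R, σ) its Cohn–Jordan extension, and L a left ideal of R. Then L is a left ideal of A if and only if σ^n(L) is a left ideal of R for every n ∈ ℕ. -/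
universe u v

private lemma iterMul {S : Type u} [Ring S] (f : S →+* S) (n : ℕ) (a b : S) :
    (⇑f)^[n] (a * b) = (⇑f)^[n] a * (⇑f)^[n] b := by
  induction n with
  | zero => rfl
  | succ n ih =>
    simp only [Function.iterate_succ_apply', ih, map_mul]

private lemma iterMulE {S : Type u} [Ring S] (f : S ≃+* S) (n : ℕ) (a b : S) :
    (⇑f)^[n] (a * b) = (⇑f)^[n] a * (⇑f)^[n] b := by
  induction n with
  | zero => rfl
  | succ n ih =>
    simp only [Function.iterate_succ_apply', ih, map_mul]

private lemma iterAdd {S : Type u} [Ring S] (f : S →+* S) (n : ℕ) (a b : S) :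
    (⇑f)^[n] (a + b) = (⇑f)^[n] a + (⇑f)^[n] b := by
  induction n with
  | zero => rfl
  | succ n ih =>
    simp only [Function.iterate_succ_apply', ih, map_add]

private lemma iterZero {S : Type u} [Ring S] (f : S →+* S) (n : ℕ) :
    (⇑f)^[n] (0 : S) = 0 := by
  induction n with
  | zero => rfl
  | succ n ih => simp only [Function.iterate_succ_apply', ih, map_zero]

private lemma iterSymm {S : Type u} [Ring S] (f : S ≃+* S) (n : ℕ) (a : S) :
    (⇑f)^[n] ((⇑f.symm)^[n] a) = a := by
  have : Function.LeftInverse ⇑f ⇑f.symm := fun z => f.apply_symm_apply z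
  exact this.iterate n a

private lemma iterInj {S : Type u} [Ring S] (f : S ≃+* S) (n : ℕ) :
    Function.Injective ((⇑f)^[n]) :=
  Function.Injective.iterate f.injective n

/-- Let `σ` be an injective endomorphism of `R` with Cohn–Jordan extension
`(A, ι, τ)` and `L` a left ideal of `R`. Then `L` is a left ideal of `A`
iff `σⁿ(L)` is a left ideal of `R` for every `n`. -/
theorem stmt14 {R A : Type u} [Ring R] [Ring A] (σ : R →+* R)
    (hinj : Function.Injective σ) (ι : R →+* A) (τ : A ≃+* A)
    (hcj : IsCohnJordan σ ι τ) (L : Ideal R) :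
    (∃ J : Ideal A, (J : Set A) = ⇑ι '' (L : Set R)) ↔
    (∀ n : ℕ, ∃ I : Ideal R, (I : Set R) = (⇑σ)^[n] '' (L : Set R)) := by
  obtain ⟨hi, hcomm, hsmall⟩ := hcj
  have key : ∀ (n : ℕ) (x : R), ι ((⇑σ)^[n] x) = (⇑τ)^[n] (ι x) := by
    intro n
    induction n with
    | zero => intro x; rfl
    | succ n ih =>
      intro x
      rw [Function.iterate_succ_apply', Function.iterate_succ_apply', ← ih, hcomm]
  constructor
  · rintro ⟨J, hJ⟩ n
    refine ⟨{ carrier := (⇑σ)^[n] '' (L : Set R)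
              add_mem' := ?_
              zero_mem' := ⟨0, L.zero_mem, iterZero σ n⟩
              smul_mem' := ?_ }, rfl⟩
    · rintro a b ⟨x, hx, rfl⟩ ⟨y, hy, rfl⟩
      exact ⟨x + y, L.add_mem hx hy, iterAdd σ n x y⟩
    · rintro r a ⟨x, hx, rfl⟩
      have hxJ : ι x ∈ J := by rw [← SetLike.mem_coe, hJ]; exact ⟨x, hx, rfl⟩
      have hbJ : (⇑τ.symm)^[n] (ι r) * ι x ∈ J := J.smul_mem _ hxJ
      rw [← SetLike.mem_coe, hJ] at hbJ
      obtain ⟨y, hy, hιy⟩ := hbJ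
      refine ⟨y, hy, hi ?_⟩
      rw [key, hιy, iterMulE τ n, iterSymm, smul_eq_mul, map_mul, key]
  · intro h
    refine ⟨{ carrier := ⇑ι '' (L : Set R)
              add_mem' := ?_
              zero_mem' := ⟨0, L.zero_mem, map_zero ι⟩
              smul_mem' := ?_ }, rfl⟩
    · rintro a b ⟨x, hx, rfl⟩ ⟨y, hy, rfl⟩
      exact ⟨x + y, L.add_mem hx hy, map_add ι x y⟩
    · rintro a b ⟨x, hx, rfl⟩
      obtain ⟨n, -, r, hr⟩ := hsmall a
      obtain ⟨I, hI⟩ := h n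
      have h1 : (⇑σ)^[n] x ∈ I := by
        rw [SetLike.mem_coe.symm, hI]; exact ⟨x, hx, rfl⟩
      have h2 : r * (⇑σ)^[n] x ∈ I := I.smul_mem r h1
      rw [← SetLike.mem_coe, hI] at h2
      obtain ⟨y, hy, hιy⟩ := h2
      refine ⟨y, hy, (iterInj τ n ?_).symm⟩
      rw [smul_eq_mul, iterMulE τ n, ← hr, ← key, ← key, ← map_mul, ← hιy]
end

section
/- Let σ be an injective endomorphism of a left noetherian ring R and A = A(R, σ) its Cohn–Jordan extension. Then σ is an automorphism of R if and only if there exists an element c ∈ R which is regular in A and satisfies Ac ⊆ R. -/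
universe u v

section CJAux
variable {R A : Type u} [Ring R] [Ring A]

lemma iterSymmMul (τ : A ≃+* A) (n : ℕ) (a b : A) :
    (⇑τ.symm)^[n] (a * b) = (⇑τ.symm)^[n] a * (⇑τ.symm)^[n] b := by
  induction n generalizing a b with
  | zero => simp
  | succ n ih => simp only [Function.iterate_succ_apply, map_mul, ih]

lemma iterSymmAdd (τ : A ≃+* A) (n : ℕ) (a b : A) :
    (⇑τ.symm)^[n] (a + b) = (⇑τ.symm)^[n] a + (⇑τ.symm)^[n] b := by
  induction n generalizing a b with
  | zero => simp
  | succ n ih => simp only [Function.iterate_succ_apply, map_add, ih]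

lemma iterSymmZero (τ : A ≃+* A) (n : ℕ) : (⇑τ.symm)^[n] (0 : A) = 0 :=
  Function.iterate_fixed (map_zero τ.symm) n

lemma iterComm (σ : R →+* R) (ι : R →+* A) (τ : A ≃+* A)
    (hcomm : ∀ r : R, τ (ι r) = ι (σ r)) (n : ℕ) (r : R) :
    (⇑τ)^[n] (ι r) = ι ((⇑σ)^[n] r) := by
  induction n generalizing r with
  | zero => rfl
  | succ n ih => rw [Function.iterate_succ_apply, hcomm, ih, Function.iterate_succ_apply]

lemma iterSymmComm (σ : R →+* R) (ι : R →+* A) (τ : A ≃+* A)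
    (hcomm : ∀ r : R, τ (ι r) = ι (σ r)) (n : ℕ) (r : R) :
    (⇑τ.symm)^[n] (ι ((⇑σ)^[n] r)) = ι r := by
  rw [← iterComm σ ι τ hcomm n r]
  exact (Function.LeftInverse.iterate τ.symm_apply_apply n) (ι r)

lemma iterLeftInv (τ : A ≃+* A) (n : ℕ) (a : A) : (⇑τ)^[n] ((⇑τ.symm)^[n] a) = a :=
  (Function.LeftInverse.iterate τ.apply_symm_apply n) a

/-- The chain of left ideals `Lₙ = {x : ι x ∈ τ⁻ⁿ(ιR)·ιc}`. -/
def cjChain (σ : R →+* R) (ι : R →+* A) (τ : A ≃+* A) (c : R)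
    (hcomm : ∀ r : R, τ (ι r) = ι (σ r)) (n : ℕ) : Ideal R where
  carrier := {x | ∃ s : R, ι x = (⇑τ.symm)^[n] (ι s) * ι c}
  zero_mem' := ⟨0, by rw [map_zero, iterSymmZero, zero_mul]⟩
  add_mem' := by
    rintro a b ⟨s, hs⟩ ⟨t, ht⟩
    exact ⟨s + t, by rw [map_add, hs, ht, map_add, iterSymmAdd, add_mul]⟩
  smul_mem' := by
    rintro r x ⟨s, hs⟩
    refine ⟨(⇑σ)^[n] r * s, ?_⟩
    rw [smul_eq_mul, map_mul, hs, map_mul, iterSymmMul, iterSymmComm σ ι τ hcomm, mul_assoc]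

lemma cjChain_mono (σ : R →+* R) (ι : R →+* A) (τ : A ≃+* A) (c : R)
    (hcomm : ∀ r : R, τ (ι r) = ι (σ r)) (n : ℕ) :
    cjChain σ ι τ c hcomm n ≤ cjChain σ ι τ c hcomm (n + 1) := by
  rintro x ⟨s, hs⟩
  refine ⟨σ s, ?_⟩
  rw [Function.iterate_succ_apply, ← hcomm, τ.symm_apply_apply]
  exact hs

end CJAux

/-- An injective endomorphism `σ` of a left noetherian ring `R` with
Cohn–Jordan extension `(A, ι, τ)` is an automorphism iff there is `c ∈ R`
regular in `A` with `Ac ⊆ R`. -/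
theorem stmt15 {R A : Type u} [Ring R] [IsNoetherianRing R] [Ring A]
    (σ : R →+* R) (hinj : Function.Injective σ) (ι : R →+* A) (τ : A ≃+* A)
    (hcj : IsCohnJordan σ ι τ) :
    Function.Bijective σ ↔
      ∃ c : R, Reg (ι c) ∧ ∀ a : A, ∃ r : R, a * ι c = ι r := by
  constructor
  · intro hb
    refine ⟨1, ⟨fun x hx => by simpa using hx, fun x hx => by simpa using hx⟩, ?_⟩
    have key : ∀ n (a : A), (⇑τ)^[n] a ∈ Set.range ι → a ∈ Set.range ι := by
      intro n
      induction n with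
      | zero => exact fun a h => h
      | succ n ih =>
        intro a h
        rw [Function.iterate_succ_apply] at h
        obtain ⟨r, hr⟩ := ih (τ a) h
        obtain ⟨s, hs⟩ := hb.2 r
        refine ⟨s, τ.injective ?_⟩
        rw [hcj.comm, hs, hr]
    intro a
    obtain ⟨n, _, hn⟩ := hcj.small a
    obtain ⟨r, hr⟩ := key n a hn
    exact ⟨r, by rw [map_one, mul_one, hr]⟩
  · rintro ⟨c, ⟨hlreg, _⟩, hAc⟩
    refine ⟨hinj, fun r => ?_⟩
    obtain ⟨N, hN⟩ := monotone_stabilizes_iff_noetherian.mpr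
      (inferInstance : IsNoetherian R R)
      ⟨cjChain σ ι τ c hcj.comm, monotone_nat_of_le_succ (cjChain_mono σ ι τ c hcj.comm)⟩
    set u : A := (⇑τ.symm)^[N + 1] (ι r) with hu_def
    obtain ⟨x, hx⟩ := hAc u
    have hxmem : x ∈ cjChain σ ι τ c hcj.comm (N + 1) := ⟨r, hx.symm⟩
    have heq : cjChain σ ι τ c hcj.comm N = cjChain σ ι τ c hcj.comm (N + 1) :=
      hN (N + 1) (Nat.le_succ N)
    rw [← heq] at hxmem
    obtain ⟨v, hv⟩ := hxmem
    have hzero : (u - (⇑τ.symm)^[N] (ι v)) * ι c = 0 := by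
      rw [sub_mul, hx, hv, sub_self]
    have hu : u = (⇑τ.symm)^[N] (ι v) := sub_eq_zero.mp (hlreg _ hzero)
    have h2 : τ.symm (ι r) = ι v := by
      have h3 := congrArg (⇑τ)^[N] hu
      rwa [hu_def, Function.iterate_succ_apply, iterLeftInv, iterLeftInv] at h3
    refine ⟨v, hcj.inj ?_⟩
    rw [← hcj.comm, ← h2, τ.apply_symm_apply]
end
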